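/- arXiv:math/0205203 — 6 statements merged into one kernel-verified Lean document; each statement's English description precedes it below -/
import Mathlib

section
/- Let H be a proper subgroup of a finite group G generated by an ordered set S = {g₁,…,g_k}. Let r = g₁^{ε₁}⋯g_k^{ε_k} be a random subproduct, where ε₁,…,ε_k are independent uniform {0,1}-valued random variables. Then with probability at least 1/2, |Hr ∖ H| ≥ |H|/2. -/
open Finset

/-! The event only depends on whether `r ∈ H`: for `r ∈ H` the coset `Hr` is `H`, otherwise it is
disjoint from `H` and has `|H|` elements. Let `j` be the last index with `g_j ∉ H`. Flipping `ε_j`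
turns `r = a x b` into `a x' b` with the same `a`, with `b ∈ H` and `x⁻¹ x' = g_j^{±1} ∉ H`, so at
most one of the two lies in `H`. Since this flip is an involution of `{0,1}^k`, `r ∉ H` for at
least half of the choices. -/

theorem List.ofFn_update {α : Type*} {k : ℕ} (f : Fin k → α) (j : Fin k) (a : α) :
    List.ofFn (Function.update f j a) = (List.ofFn f).set j a := by
  refine List.ext_getElem (by simp) fun n h _ => ?_
  have hn : n < k := by simpa using h
  rcases eq_or_ne (j : ℕ) n with rfl | hjn
  · simp
  · have : (⟨n, hn⟩ : Fin k) ≠ j := fun h => hjn (by rw [← h])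
    simp [List.getElem_set_ne hjn, Function.update_of_ne this]

theorem Finset.card_le_two_mul_card_filter_not {α : Type*} [Fintype α] (p : α → Prop)
    [DecidablePred p] {f : α → α} (hf : f.Injective) (hpf : ∀ a, p a → ¬p (f a)) :
    Fintype.card α ≤ 2 * #{a | ¬p a} := by
  have hle : #(univ.filter p) ≤ #{a | ¬p a} :=
    card_le_card_of_injOn f (fun a ha => by simp_all) hf.injOn
  have := card_filter_add_card_filter_not (s := univ) p
  rw [card_univ] at this
  omega

theorem List.exists_lt_of_mem_drop_ofFn {α : Type*} {k : ℕ} {f : Fin k → α} {j : Fin k} {x : α}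
    (hx : x ∈ (List.ofFn f).drop (j + 1)) : ∃ i, j < i ∧ f i = x := by
  obtain ⟨m, hm, rfl⟩ := List.mem_iff_getElem.1 hx
  have hm' : j + 1 + m < k := by simp at hm; omega
  exact ⟨⟨j + 1 + m, hm'⟩, by rw [Fin.lt_def]; simp; omega, by simp⟩

def subproduct {M : Type*} [Monoid M] {k : ℕ} (S : Fin k → M) (ε : Fin k → Bool) : M :=
  (List.ofFn fun i => if ε i then S i else 1).prod

namespace Subgroup

variable {G : Type*} [Group G] (H : Subgroup G)

theorem exists_notMem_forall_gt_mem {k : ℕ} {S : Fin k → G}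
    (hgen : closure (Set.range S) = ⊤) (hH : H ≠ ⊤) :
    ∃ j, S j ∉ H ∧ ∀ i, j < i → S i ∈ H := by
  classical
  have hne : ({i | S i ∉ H} : Finset (Fin k)).Nonempty := by
    by_contra hempty
    refine hH (top_le_iff.mp (hgen ▸ (closure_le H).2 ?_))
    rintro _ ⟨i, rfl⟩
    by_contra hi
    exact hempty ⟨i, by simpa using hi⟩
  refine ⟨_, by simpa using max'_mem _ hne, fun i hji => ?_⟩
  by_contra hi
  exact (le_max' _ i (by simpa using hi)).not_gt hji

theorem inv_getElem_mul_mem_of_prod_mem_of_prod_set_mem {l : List G} {n : ℕ}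
    (hn : n < l.length) (a : G) (htail : ∀ x ∈ l.drop (n + 1), x ∈ H)
    (hl : l.prod ∈ H) (hset : (l.set n a).prod ∈ H) : l[n]⁻¹ * a ∈ H := by
  have hsplit := List.prod_set l n l[n]
  rw [List.set_getElem_self, if_pos hn] at hsplit
  rw [List.prod_set, if_pos hn] at hset
  rw [hsplit] at hl
  set s := (l.drop (n + 1)).prod
  have hs : s ∈ H := list_prod_mem htail
  have := H.mul_mem (H.mul_mem hs (H.mul_mem (H.inv_mem hl) hset)) (H.inv_mem hs)
  convert this using 1
  group

theorem subproduct_update_notMem {k : ℕ} {S : Fin k → G} {j : Fin k} (hj : S j ∉ H)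
    (htail : ∀ i, j < i → S i ∈ H) {ε : Fin k → Bool} (hε : subproduct S ε ∈ H) :
    subproduct S (Function.update ε j (!ε j)) ∉ H := by
  intro hflip
  let factor : Fin k → Bool → G := fun i b => if b then S i else 1
  have hupdate : (fun i => factor i (Function.update ε j (!ε j) i)) =
      Function.update (fun i => factor i (ε i)) j (factor j !ε j) :=
    funext (Function.apply_update factor ε j (!ε j))
  rw [subproduct, hupdate, List.ofFn_update] at hflip
  have key := H.inv_getElem_mul_mem_of_prod_mem_of_prod_set_mem (by simp) _
    (fun x hx => ?_) hε hflip
  · cases hεj : ε j <;> simp [factor, hεj, H.inv_mem_iff] at key <;> exact hj key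
  · obtain ⟨i, hji, rfl⟩ := List.exists_lt_of_mem_drop_ofFn hx
    by_cases hεi : ε i
    · simpa [hεi] using htail i hji
    · simp [hεi, H.one_mem]

section RightCoset

variable [Fintype G] [DecidableEq G] [DecidablePred (· ∈ H)]

theorem image_mul_right_filter_mem_of_mem {r : G} (hr : r ∈ H) :
    (univ.filter (· ∈ H)).image (· * r) = univ.filter (· ∈ H) := by
  ext g
  simp only [mem_image, mem_filter, mem_univ, true_and]
  refine ⟨?_, fun hg => ⟨g * r⁻¹, H.mul_mem hg (H.inv_mem hr), by group⟩⟩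
  rintro ⟨h, hh, rfl⟩
  exact H.mul_mem hh hr

theorem disjoint_image_mul_right_filter_mem {r : G} (hr : r ∉ H) :
    Disjoint ((univ.filter (· ∈ H)).image (· * r)) (univ.filter (· ∈ H)) := by
  simp only [disjoint_left, mem_image, mem_filter, mem_univ, true_and]
  rintro _ ⟨h, hh, rfl⟩ hhr
  exact hr (by simpa using H.mul_mem (H.inv_mem hh) hhr)

theorem le_two_mul_card_image_mul_right_sdiff_iff (r : G) :
    Nat.card H ≤ 2 * #((univ.filter (· ∈ H)).image (· * r) \ univ.filter (· ∈ H)) ↔ r ∉ H := by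
  have hcard : Nat.card H = #(univ.filter (· ∈ H)) := by
    rw [Nat.card_eq_fintype_card, Fintype.card_subtype]
  have hpos : 0 < #(univ.filter (· ∈ H)) := card_pos.2 ⟨1, by simp [H.one_mem]⟩
  by_cases hr : r ∈ H
  · rw [image_mul_right_filter_mem_of_mem H hr, sdiff_self, bot_eq_empty, card_empty]
    exact iff_of_false (by omega) (not_not.2 hr)
  · rw [sdiff_eq_self_of_disjoint (disjoint_image_mul_right_filter_mem H hr),
      card_image_of_injective _ (mul_left_injective r)]
    exact iff_of_true (by omega) hr

end RightCoset

end Subgroup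

/-- Random subproduct lemma: for H a proper subgroup of G = ⟨S⟩ and r a random
    subproduct on the ordered set S, with probability ≥ 1/2 (over the 2^k choices of
    exponents), |Hr \ H| ≥ |H|/2. -/
theorem stmt1 {G : Type*} [Fintype G] [Group G] [DecidableEq G]
    (k : ℕ) (S : Fin k → G) (hgen : Subgroup.closure (Set.range S) = ⊤)
    (H : Subgroup G) [DecidablePred (· ∈ H)] (hH : H ≠ ⊤) :
    2 ^ k ≤ 2 * ((Finset.univ : Finset (Fin k → Bool)).filter (fun ε =>
      Nat.card H ≤ 2 * ((((Finset.univ : Finset G).filter (· ∈ H)).image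
          (· * (List.ofFn fun i => if ε i then S i else 1).prod) \
        (Finset.univ : Finset G).filter (· ∈ H)).card))).card := by
  obtain ⟨j, hj, htail⟩ := H.exists_notMem_forall_gt_mem hgen hH
  have hflip : Function.Injective fun ε : Fin k → Bool => Function.update ε j (!ε j) :=
    Function.Involutive.injective fun ε => by simp
  have hcount := card_le_two_mul_card_filter_not (fun ε => subproduct S ε ∈ H) hflip
    fun ε => H.subproduct_update_notMem hj htail
  rw [Fintype.card_fun, Fintype.card_bool, Fintype.card_fin] at hcount
  simp_rw [Subgroup.le_two_mul_card_image_mul_right_sdiff_iff]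
  exact hcount
end

section
/- Let 1/2 < α ≤ 1 and let A ⊆ G with |A| ≥ α|G|. Let U₁, U₂, V be independent G-valued random variables with U₁ and U₂ uniform on A (and vanishing off A). Then for all g ∈ G, −((1−α)/α)²·(1/|G|) ≤ Pr(U₁⁻¹ V U₂ = g) − 1/|G| ≤ ((1−α)/α)·(1/|G|). In particular U₁⁻¹ V U₂ is a ((1−α)/α)-uniform random variable on G. -/
open Finset

variable {G : Type*} [Fintype G] [Group G]

/-- A probability mass function on a finite group. -/
def IsPMF (μ : G → ℝ) : Prop := (∀ g, 0 ≤ μ g) ∧ ∑ g, μ g = 1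

/-! The probability that `U₁⁻¹ V U₂ = g` is `∑ᵥ ν v · #(A ∩ v A g⁻¹) / #A²`. Two translates of
`A` overlap in at least `2#A - #G` and at most `#A` points, so the probability lies between
`(2#A - #G)/#A²` and `1/#A`; writing `#A ≥ α#G` turns these into the stated bounds, the lower one
because `(2a - n)/a² - 1/n = -((n - a)/a)²/n` and `(n - a)/a ≤ (1 - α)/α`. -/

lemma Finset.card_add_card_sub_card_univ_le_card_inter {α : Type*} [Fintype α] [DecidableEq α]
    (s t : Finset α) : (#s : ℝ) + #t - Fintype.card α ≤ #(s ∩ t) := by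
  have hsum := card_inter_add_card_union s t
  have hunion := card_le_univ (s ∪ t)
  rw [sub_le_iff_le_add]
  exact_mod_cast (by omega : #s + #t ≤ #(s ∩ t) + Fintype.card α)

section Overlap

variable [DecidableEq G]

lemma card_filter_inv_mul_mul_mem (A : Finset G) (v g : G) :
    #{u | v⁻¹ * u * g ∈ A} = #A :=
  card_equiv ((Equiv.mulLeft v⁻¹).trans (Equiv.mulRight g)) (by simp)

lemma two_mul_card_sub_card_univ_le_card_filter_inv_mul_mul_mem (A : Finset G) (v g : G) :
    2 * (#A : ℝ) - Fintype.card G ≤ #{u ∈ A | v⁻¹ * u * g ∈ A} := by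
  have hinter : {u ∈ A | v⁻¹ * u * g ∈ A} = A ∩ ({u | v⁻¹ * u * g ∈ A} : Finset G) := by
    ext u; simp
  have := card_add_card_sub_card_univ_le_card_inter A ({u | v⁻¹ * u * g ∈ A} : Finset G)
  rw [card_filter_inv_mul_mul_mem] at this
  rw [hinter]
  linarith

lemma sum_uniform_mul_mul_uniform_eq (A : Finset G) (ν : G → ℝ) (g : G) :
    ∑ u : G, ∑ v : G,
        (if u ∈ A then ((#A : ℝ))⁻¹ else 0) * ν v *
          (if v⁻¹ * u * g ∈ A then ((#A : ℝ))⁻¹ else 0) =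
      ∑ v : G, ν v * ((#{u ∈ A | v⁻¹ * u * g ∈ A} : ℝ) / (#A : ℝ) ^ 2) := by
  rw [sum_comm]
  refine sum_congr rfl fun v _ => ?_
  have hterm : ∀ u : G, (if u ∈ A then ((#A : ℝ))⁻¹ else 0) * ν v *
      (if v⁻¹ * u * g ∈ A then ((#A : ℝ))⁻¹ else 0) =
        ν v * if u ∈ A ∧ v⁻¹ * u * g ∈ A then ((#A : ℝ) ^ 2)⁻¹ else 0 := by
    intro u
    by_cases h₁ : u ∈ A <;> by_cases h₂ : v⁻¹ * u * g ∈ A <;> simp [h₁, h₂]; ring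
  have hfilter : ({u | u ∈ A ∧ v⁻¹ * u * g ∈ A} : Finset G) = {u ∈ A | v⁻¹ * u * g ∈ A} := by
    ext u; simp
  rw [sum_congr rfl fun u _ => hterm u, ← mul_sum, ← sum_filter, sum_const, nsmul_eq_mul, hfilter,
    div_eq_mul_inv]

end Overlap

lemma IsPMF.sum_mul_le {ι : Type*} [Fintype ι] {ν f : ι → ℝ} (hν : IsPMF ν)
    {M : ℝ} (hf : ∀ v, f v ≤ M) :
    ∑ v, ν v * f v ≤ M :=
  calc ∑ v, ν v * f v ≤ ∑ v, ν v * M :=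
        sum_le_sum fun v _ => mul_le_mul_of_nonneg_left (hf v) (hν.1 v)
    _ = M := by rw [← sum_mul, hν.2, one_mul]

lemma IsPMF.le_sum_mul {ι : Type*} [Fintype ι] {ν f : ι → ℝ} (hν : IsPMF ν)
    {m : ℝ} (hf : ∀ v, m ≤ f v) :
    m ≤ ∑ v, ν v * f v :=
  calc m = ∑ v, ν v * m := by rw [← sum_mul, hν.2, one_mul]
    _ ≤ ∑ v, ν v * f v := sum_le_sum fun v _ => mul_le_mul_of_nonneg_left (hf v) (hν.1 v)

lemma one_div_sub_one_div_le_of_mul_le {α a n : ℝ} (hα : 0 < α) (hn : 0 < n) (ha : α * n ≤ a) :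
    1 / a - 1 / n ≤ (1 - α) / α * (1 / n) := by
  have : 1 / a ≤ 1 / (α * n) := one_div_le_one_div_of_le (by positivity) ha
  calc 1 / a - 1 / n ≤ 1 / (α * n) - 1 / n := by linarith
    _ = (1 - α) / α * (1 / n) := by field_simp

lemma neg_sq_mul_one_div_le_of_mul_le {α a n : ℝ} (hα : 0 < α) (hn : 0 < n) (ha : α * n ≤ a)
    (han : a ≤ n) : -((1 - α) / α) ^ 2 * (1 / n) ≤ (2 * a - n) / a ^ 2 - 1 / n := by
  have ha0 : 0 < a := lt_of_lt_of_le (by positivity) ha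
  have hratio : (n - a) / a ≤ (1 - α) / α := by
    rw [div_le_div_iff₀ ha0 hα]; nlinarith
  have hratio0 : 0 ≤ (n - a) / a := div_nonneg (by linarith) ha0.le
  calc -((1 - α) / α) ^ 2 * (1 / n) ≤ -((n - a) / a) ^ 2 * (1 / n) := by
        gcongr
    _ = (2 * a - n) / a ^ 2 - 1 / n := by field_simp; ring

theorem stmt5_general [DecidableEq G] (α : ℝ) (hα1 : 1 / 2 < α)
    (A : Finset G) (hA : α * (Fintype.card G : ℝ) ≤ (A.card : ℝ))
    (ν : G → ℝ) (hν : IsPMF ν) (g : G) :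
    -(((1 - α) / α) ^ 2) * (1 / (Fintype.card G : ℝ)) ≤
        (∑ u : G, ∑ v : G,
          (if u ∈ A then ((A.card : ℝ))⁻¹ else 0) * ν v *
            (if v⁻¹ * u * g ∈ A then ((A.card : ℝ))⁻¹ else 0)) -
          1 / (Fintype.card G : ℝ) ∧
      (∑ u : G, ∑ v : G,
          (if u ∈ A then ((A.card : ℝ))⁻¹ else 0) * ν v *
            (if v⁻¹ * u * g ∈ A then ((A.card : ℝ))⁻¹ else 0)) -
          1 / (Fintype.card G : ℝ) ≤
        ((1 - α) / α) * (1 / (Fintype.card G : ℝ)) := by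
  have hα : 0 < α := by linarith
  have hG : (0 : ℝ) < Fintype.card G := by exact_mod_cast Fintype.card_pos
  have hAG : (#A : ℝ) ≤ Fintype.card G := by exact_mod_cast card_le_univ A
  have hupper : ∑ v, ν v * ((#{u ∈ A | v⁻¹ * u * g ∈ A} : ℝ) / (#A : ℝ) ^ 2) ≤ 1 / (#A : ℝ) :=
    hν.sum_mul_le fun v => by
      calc (#{u ∈ A | v⁻¹ * u * g ∈ A} : ℝ) / (#A : ℝ) ^ 2 ≤ (#A : ℝ) / (#A : ℝ) ^ 2 := by
            gcongr; exact filter_subset _ _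
        _ = 1 / (#A : ℝ) := by rw [sq, div_self_mul_self', one_div]
  have hlower : (2 * #A - Fintype.card G) / (#A : ℝ) ^ 2 ≤
      ∑ v, ν v * ((#{u ∈ A | v⁻¹ * u * g ∈ A} : ℝ) / (#A : ℝ) ^ 2) :=
    hν.le_sum_mul fun v => by gcongr; exact two_mul_card_sub_card_univ_le_card_filter_inv_mul_mul_mem A v g
  rw [sum_uniform_mul_mul_uniform_eq]
  have := neg_sq_mul_one_div_le_of_mul_le hα hG hA hAG
  have := one_div_sub_one_div_le_of_mul_le hα hG hA
  exact ⟨by linarith, by linarith⟩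

/-- For 1/2 < α ≤ 1, A ⊆ G with |A| ≥ α|G|, U₁, U₂ uniform on A and V arbitrary,
    all independent, the distribution of U₁⁻¹ V U₂ satisfies
    −((1−α)/α)²/|G| ≤ Pr(U₁⁻¹VU₂=g) − 1/|G| ≤ ((1−α)/α)/|G|. -/
theorem stmt5 [DecidableEq G] (α : ℝ) (hα1 : 1 / 2 < α) (hα2 : α ≤ 1)
    (A : Finset G) (hA : α * (Fintype.card G : ℝ) ≤ (A.card : ℝ))
    (ν : G → ℝ) (hν : IsPMF ν) (g : G) :
    -(((1 - α) / α) ^ 2) * (1 / (Fintype.card G : ℝ)) ≤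
        (∑ u : G, ∑ v : G,
          (if u ∈ A then ((A.card : ℝ))⁻¹ else 0) * ν v *
            (if v⁻¹ * u * g ∈ A then ((A.card : ℝ))⁻¹ else 0)) -
          1 / (Fintype.card G : ℝ) ∧
      (∑ u : G, ∑ v : G,
          (if u ∈ A then ((A.card : ℝ))⁻¹ else 0) * ν v *
            (if v⁻¹ * u * g ∈ A then ((A.card : ℝ))⁻¹ else 0)) -
          1 / (Fintype.card G : ℝ) ≤
        ((1 - α) / α) * (1 / (Fintype.card G : ℝ)) :=
  stmt5_general α hα1 A hA ν hν g
end

section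
/- Let X and Y be independent random variables on a finite group G, with X δ-uniform and Y ε-uniform. Then the product XY is δε-uniform. -/
open Finset

variable {G : Type*} [Fintype G] [Group G]

/-- Distribution of the product of independent random variables. -/
noncomputable def conv (μ ν : G → ℝ) (g : G) : ℝ := ∑ h, μ h * ν (h⁻¹ * g)

/-- X is ε-uniform: |Pr(X=g) − 1/|G|| ≤ ε/|G| for all g. -/
def IsEpsUniform (μ : G → ℝ) (ε : ℝ) : Prop :=
  ∀ g : G, |μ g - 1 / (Fintype.card G : ℝ)| ≤ ε / (Fintype.card G : ℝ)

/-!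
Writing `u = 1/|G|` for the uniform mass, the deviations `μ - u` and `ν - u` both sum to zero,
so the cross terms cancel and `conv μ ν - u` is the convolution of the two deviations. By the
triangle inequality it is then a sum of `|G|` terms, each at most `(δ/|G|) (ε/|G|)`.
-/

theorem sum_inv_mul_right {M : Type*} [AddCommMonoid M] (f : G → M) (g : G) :
    ∑ h, f (h⁻¹ * g) = ∑ h, f h :=
  Fintype.sum_equiv ((Equiv.inv G).trans (Equiv.mulRight g)) _ _ fun _ => rfl

theorem conv_sub_inv_card {μ ν : G → ℝ} (hμ : ∑ g, μ g = 1) (hν : ∑ g, ν g = 1)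
    (g : G) :
    conv μ ν g - 1 / Fintype.card G =
      ∑ h, (μ h - 1 / Fintype.card G) * (ν (h⁻¹ * g) - 1 / Fintype.card G) := by
  have hcard : (Fintype.card G : ℝ) ≠ 0 := by positivity
  simp only [sub_mul, mul_sub, sum_sub_distrib, ← sum_mul, ← mul_sum, sum_inv_mul_right ν g,
    hμ, hν, sum_const, card_univ, nsmul_eq_mul, conv]
  field_simp
  ring

theorem stmt11_general (μ ν : G → ℝ) (hμ : IsPMF μ) (hν : IsPMF ν) (δ ε : ℝ)
    (hX : IsEpsUniform μ δ) (hY : IsEpsUniform ν ε) :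
    IsEpsUniform (conv μ ν) (δ * ε) := by
  intro g
  set n : ℝ := (Fintype.card G : ℝ) with hn_def
  rw [conv_sub_inv_card hμ.2 hν.2]
  calc |∑ h, (μ h - 1 / n) * (ν (h⁻¹ * g) - 1 / n)|
      ≤ ∑ h, |μ h - 1 / n| * |ν (h⁻¹ * g) - 1 / n| :=
        (abs_sum_le_sum_abs _ _).trans_eq (sum_congr rfl fun _ _ => abs_mul _ _)
    _ ≤ ∑ _h : G, δ / n * (ε / n) :=
        sum_le_sum fun h _ =>
          mul_le_mul (hX h) (hY _) (abs_nonneg _) ((abs_nonneg _).trans (hX h))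
    _ = δ * ε / n := by
        have hn : n ≠ 0 := by positivity
        rw [sum_const, card_univ, nsmul_eq_mul, ← hn_def]
        field_simp

/-- If X is δ-uniform and Y is ε-uniform, X and Y independent, then XY is δε-uniform. -/
theorem stmt11 (μ ν : G → ℝ) (hμ : IsPMF μ) (hν : IsPMF ν) (δ ε : ℝ)
    (hδ0 : 0 ≤ δ) (hδ1 : δ ≤ 1) (hε0 : 0 ≤ ε) (hε1 : ε ≤ 1)
    (hX : IsEpsUniform μ δ) (hY : IsEpsUniform ν ε) :
    IsEpsUniform (conv μ ν) (δ * ε) :=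
  stmt11_general μ ν hμ hν δ ε hX hY
end

section
/- Let X, Y, W be independent random variables on a finite group G and J an independent {0,1}-random variable, and let Z be distributed as X^J Y^{1−J}. Suppose ‖XW‖ ≤ α‖X‖ and Pr(J=1)·‖X‖ ≥ c·Pr(J=0)·‖Y‖ for some 0 < α ≤ 1 and c > 0. Then ‖ZW‖ ≤ ((1 + αc)/√(1 + c²))·‖Z‖. -/
open Finset

variable {G : Type*} [Fintype G] [Group G]

/-- ℓ² norm of a distribution on a finite group. -/
noncomputable def l2norm (μ : G → ℝ) : ℝ := Real.sqrt (∑ g, μ g ^ 2)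

lemma l2norm_nonneg' (μ : G → ℝ) : 0 ≤ l2norm μ := Real.sqrt_nonneg _

lemma l2norm_sq' (μ : G → ℝ) : l2norm μ ^ 2 = ∑ g, μ g ^ 2 :=
  Real.sq_sqrt (by positivity)

lemma l2norm_le_of_sq_le' {μ : G → ℝ} {t : ℝ} (ht : 0 ≤ t)
    (h : ∑ g, μ g ^ 2 ≤ t ^ 2) : l2norm μ ≤ t := by
  have := Real.sqrt_le_sqrt h
  rwa [Real.sqrt_sq ht] at this

/-- Young's inequality: convolving with a PMF doesn't increase the ℓ² norm. -/
lemma young' (μ ω : G → ℝ) (hω : IsPMF ω) :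
    l2norm (conv μ ω) ≤ l2norm μ := by
  have hsum : ∀ g : G, ∑ h, ω (h⁻¹ * g) = 1 := by
    intro g
    rw [Fintype.sum_equiv ((Equiv.inv G).trans (Equiv.mulRight g))
      (fun h => ω (h⁻¹ * g)) ω (fun h => rfl)]
    exact hω.2
  have key : ∀ g : G, (conv μ ω g) ^ 2 ≤ ∑ h, ω (h⁻¹ * g) * μ h ^ 2 := by
    intro g
    have h1 : conv μ ω g
        = ∑ h, Real.sqrt (ω (h⁻¹ * g)) * (Real.sqrt (ω (h⁻¹ * g)) * μ h) := by
      unfold conv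
      refine Finset.sum_congr rfl fun h _ => ?_
      rw [← mul_assoc, Real.mul_self_sqrt (hω.1 _)]
      ring
    have h2 := sum_mul_sq_le_sq_mul_sq Finset.univ
      (fun h => Real.sqrt (ω (h⁻¹ * g))) (fun h => Real.sqrt (ω (h⁻¹ * g)) * μ h)
    rw [h1]
    calc (∑ h, Real.sqrt (ω (h⁻¹ * g)) * (Real.sqrt (ω (h⁻¹ * g)) * μ h)) ^ 2
        ≤ (∑ h, Real.sqrt (ω (h⁻¹ * g)) ^ 2) * ∑ h, (Real.sqrt (ω (h⁻¹ * g)) * μ h) ^ 2 :=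
          h2
      _ = (∑ h, ω (h⁻¹ * g)) * ∑ h, ω (h⁻¹ * g) * μ h ^ 2 := by
          congr 1
          · exact Finset.sum_congr rfl fun h _ => Real.sq_sqrt (hω.1 _)
          · refine Finset.sum_congr rfl fun h _ => ?_
            rw [mul_pow, Real.sq_sqrt (hω.1 _)]
      _ = ∑ h, ω (h⁻¹ * g) * μ h ^ 2 := by rw [hsum g, one_mul]
  have hsum2 : ∀ h : G, ∑ g, ω (h⁻¹ * g) = 1 := by
    intro h
    rw [Fintype.sum_equiv (Equiv.mulLeft h⁻¹) (fun g => ω (h⁻¹ * g)) ω (fun g => rfl)]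
    exact hω.2
  apply l2norm_le_of_sq_le' (l2norm_nonneg' μ)
  rw [l2norm_sq']
  calc ∑ g, conv μ ω g ^ 2 ≤ ∑ g, ∑ h, ω (h⁻¹ * g) * μ h ^ 2 :=
        Finset.sum_le_sum fun g _ => key g
    _ = ∑ h, ∑ g, ω (h⁻¹ * g) * μ h ^ 2 := Finset.sum_comm
    _ = ∑ h : G, μ h ^ 2 := by
        refine Finset.sum_congr rfl fun h _ => ?_
        rw [← Finset.sum_mul, hsum2 h, one_mul]

lemma l2norm_triangle' (f g : G → ℝ) :
    l2norm (fun x => f x + g x) ≤ l2norm f + l2norm g := by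
  apply l2norm_le_of_sq_le' (add_nonneg (l2norm_nonneg' f) (l2norm_nonneg' g))
  have cs := Real.sum_mul_le_sqrt_mul_sqrt Finset.univ f g
  have h : ∑ x, (f x + g x) ^ 2
      = (∑ x, f x ^ 2) + 2 * (∑ x, f x * g x) + ∑ x, g x ^ 2 := by
    simp_rw [add_sq, Finset.sum_add_distrib, Finset.mul_sum]
    ring_nf
  rw [h]
  have h1 : l2norm f ^ 2 = ∑ x, f x ^ 2 := l2norm_sq' f
  have h2 : l2norm g ^ 2 = ∑ x, g x ^ 2 := l2norm_sq' g
  unfold l2norm at *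
  nlinarith [cs]

lemma l2norm_smul' {t : ℝ} (ht : 0 ≤ t) (f : G → ℝ) :
    l2norm (fun x => t * f x) = t * l2norm f := by
  unfold l2norm
  have h : ∑ x, (t * f x) ^ 2 = t ^ 2 * ∑ x, f x ^ 2 := by
    rw [Finset.mul_sum]
    exact Finset.sum_congr rfl fun x _ => by ring
  rw [h, Real.sqrt_mul (sq_nonneg t), Real.sqrt_sq ht]

/-- If Z ∼ X^J Y^{1−J} with p = Pr(J=1), ‖XW‖ ≤ α‖X‖ and p‖X‖ ≥ c(1−p)‖Y‖,
    then ‖ZW‖ ≤ ((1+αc)/√(1+c²))‖Z‖. -/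
theorem stmt13 (μX μY ω : G → ℝ) (hX : IsPMF μX) (hY : IsPMF μY) (hW : IsPMF ω)
    (p : ℝ) (hp0 : 0 ≤ p) (hp1 : p ≤ 1) (α c : ℝ) (hα0 : 0 < α) (hα1 : α ≤ 1) (hc : 0 < c)
    (hXW : l2norm (conv μX ω) ≤ α * l2norm μX)
    (hcomp : c * ((1 - p) * l2norm μY) ≤ p * l2norm μX) :
    l2norm (conv (fun g => p * μX g + (1 - p) * μY g) ω) ≤
      ((1 + α * c) / Real.sqrt (1 + c ^ 2)) *
        l2norm (fun g => p * μX g + (1 - p) * μY g) := by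
  set Z : G → ℝ := fun g => p * μX g + (1 - p) * μY g with hZdef
  set a : ℝ := p * l2norm μX with hadef
  set b : ℝ := (1 - p) * l2norm μY with hbdef
  have hq0 : 0 ≤ 1 - p := by linarith
  have ha : 0 ≤ a := mul_nonneg hp0 (l2norm_nonneg' _)
  have hb : 0 ≤ b := mul_nonneg hq0 (l2norm_nonneg' _)
  have hcb : c * b ≤ a := hcomp
  -- conv is linear in the first argument
  have hconvZ : conv Z ω = fun g =>
      p * conv μX ω g + (1 - p) * conv μY ω g := by
    funext g
    unfold conv
    simp only [hZdef]
    rw [Finset.mul_sum, Finset.mul_sum, ← Finset.sum_add_distrib]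
    refine Finset.sum_congr rfl fun h _ => ?_
    ring
  -- ‖ZW‖ ≤ α a + b
  have hZW1 : l2norm (conv Z ω) ≤ α * a + b := by
    rw [hconvZ]
    calc l2norm (fun g => p * conv μX ω g + (1 - p) * conv μY ω g)
        ≤ l2norm (fun g => p * conv μX ω g) + l2norm (fun g => (1 - p) * conv μY ω g) :=
          l2norm_triangle' _ _
      _ = p * l2norm (conv μX ω) + (1 - p) * l2norm (conv μY ω) := by
          rw [l2norm_smul' hp0, l2norm_smul' hq0]
      _ ≤ p * (α * l2norm μX) + (1 - p) * l2norm μY := by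
          gcongr
          exact young' μY ω hW
      _ = α * a + b := by rw [hadef, hbdef]; ring
  -- ‖ZW‖ ≤ ‖Z‖
  have hZW2 : l2norm (conv Z ω) ≤ l2norm Z := young' Z ω hW
  -- a² + b² ≤ ‖Z‖²
  have hZlow : a ^ 2 + b ^ 2 ≤ l2norm Z ^ 2 := by
    rw [hadef, hbdef, mul_pow, mul_pow, l2norm_sq', l2norm_sq', l2norm_sq',
      Finset.mul_sum, Finset.mul_sum, ← Finset.sum_add_distrib]
    refine Finset.sum_le_sum fun g _ => ?_
    have hZg : Z g = p * μX g + (1 - p) * μY g := rfl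
    rw [hZg]
    have h1 := hX.1 g
    have h2 := hY.1 g
    have := mul_nonneg (mul_nonneg hp0 hq0) (mul_nonneg h1 h2)
    nlinarith
  have ht : 0 ≤ l2norm Z := l2norm_nonneg' Z
  have hs : 0 < Real.sqrt (1 + c ^ 2) := Real.sqrt_pos.2 (by positivity)
  set M : ℝ := (1 + α * c) / Real.sqrt (1 + c ^ 2) with hMdef
  rcases le_or_gt 1 M with hM | hM
  · calc l2norm (conv Z ω) ≤ l2norm Z := hZW2
      _ ≤ M * l2norm Z := le_mul_of_one_le_left ht hM
  · -- M < 1 case: (1+αc)² < 1+c²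
    have hnum : 1 + α * c < Real.sqrt (1 + c ^ 2) := by
      rw [hMdef, div_lt_one hs] at hM
      exact hM
    have hnum0 : 0 ≤ 1 + α * c := by positivity
    have hsq : (1 + α * c) ^ 2 < 1 + c ^ 2 := by
      have h2 := pow_lt_pow_left₀ hnum hnum0 (by norm_num : 2 ≠ 0)
      rwa [Real.sq_sqrt (show (0:ℝ) ≤ 1 + c ^ 2 by positivity)] at h2
    -- hence c - 2α - α²c > 0
    have hB : 0 ≤ c - 2 * α - α ^ 2 * c := by nlinarith [hsq, hc]
    have hA : 0 ≤ 1 + 2 * α * c - α ^ 2 := by nlinarith [mul_pos hα0 hc]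
    -- key polynomial inequality
    have hpoly : (α * a + b) ^ 2 * (1 + c ^ 2) ≤ (1 + α * c) ^ 2 * (a ^ 2 + b ^ 2) := by
      have hfac : 0 ≤ (a - c * b) * ((1 + 2 * α * c - α ^ 2) * a + (c - 2 * α - α ^ 2 * c) * b) :=
        mul_nonneg (by linarith) (add_nonneg (mul_nonneg hA ha) (mul_nonneg hB hb))
      nlinarith [hfac]
    -- so α a + b ≤ M √(a²+b²) ≤ M ‖Z‖
    have hab0 : 0 ≤ α * a + b := by positivity
    have hroot : α * a + b ≤ M * Real.sqrt (a ^ 2 + b ^ 2) := by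
      rw [hMdef, div_mul_eq_mul_div, le_div_iff₀ hs]
      calc (α * a + b) * Real.sqrt (1 + c ^ 2)
          = Real.sqrt ((α * a + b) ^ 2 * (1 + c ^ 2)) := by
            rw [Real.sqrt_mul (sq_nonneg _), Real.sqrt_sq hab0]
        _ ≤ Real.sqrt ((1 + α * c) ^ 2 * (a ^ 2 + b ^ 2)) := Real.sqrt_le_sqrt hpoly
        _ = (1 + α * c) * Real.sqrt (a ^ 2 + b ^ 2) := by
            rw [Real.sqrt_mul (sq_nonneg _), Real.sqrt_sq hnum0]
    have hM0 : 0 ≤ M := div_nonneg hnum0 hs.le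
    have hroot2 : Real.sqrt (a ^ 2 + b ^ 2) ≤ l2norm Z := by
      have := Real.sqrt_le_sqrt hZlow
      rwa [Real.sqrt_sq ht] at this
    calc l2norm (conv Z ω) ≤ α * a + b := hZW1
      _ ≤ M * Real.sqrt (a ^ 2 + b ^ 2) := hroot
      _ ≤ M * l2norm Z := by gcongr
end

section
/- Let X and W be independent random variables on a finite group G, E a uniform {0,1}-random variable independent of both. Suppose Pr(W ∉ supp(X)) ≥ δ and Pr(W=g) = max_{h∈G} Pr(W=h) for all g ∈ supp(X). Let λ > 1. Then with probability at least 1 − 1/λ over g drawn from the distribution of W, ‖Xg^E‖ < √(λ(1 − δ/2))·‖X‖. -/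
/-!
Write `S = ‖X‖²` and `M = max_h Pr(W = h)`. Expanding the square,
`‖Xg^E‖² = (S + Pr(X'⁻¹X = g)) / 2` for an independent copy `X'` of `X`, so averaging over
`g ∼ W` gives `𝔼‖XW^E‖² ≤ (S + M) / 2`. Since `W` takes the value `M` on all of `supp(X)`,
`|supp(X)| · M ≤ 1 - δ`, while Cauchy–Schwarz gives `1 ≤ |supp(X)| · S`; hence `M ≤ (1 - δ) S`
and `𝔼‖XW^E‖² ≤ (1 - δ/2) S`. Markov's inequality finishes the proof.
-/

open Finset

variable {G : Type*} [Fintype G] [Group G]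

section Weighted

variable {ι : Type*} [Fintype ι]

theorem one_sub_div_le_sum_filter_lt {w f : ι → ℝ} (hw0 : ∀ i, 0 ≤ w i) (hw1 : ∑ i, w i = 1)
    (hf0 : ∀ i, 0 ≤ f i) {t : ℝ} (ht : 0 < t) :
    1 - (∑ i, w i * f i) / t ≤ ∑ i ∈ univ.filter (fun i => f i < t), w i := by
  have hmarkov : (∑ i ∈ univ.filter (fun i => ¬ f i < t), w i) * t ≤ ∑ i, w i * f i :=
    calc (∑ i ∈ univ.filter (fun i => ¬ f i < t), w i) * t
        = ∑ i ∈ univ.filter (fun i => ¬ f i < t), w i * t := sum_mul _ _ _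
      _ ≤ ∑ i ∈ univ.filter (fun i => ¬ f i < t), w i * f i :=
          sum_le_sum fun i hi => mul_le_mul_of_nonneg_left (not_lt.1 (mem_filter.1 hi).2) (hw0 i)
      _ ≤ ∑ i, w i * f i :=
          sum_le_sum_of_subset_of_nonneg (filter_subset _ _)
            fun i _ _ => mul_nonneg (hw0 i) (hf0 i)
  have hsplit := sum_filter_add_sum_filter_not univ (fun i => f i < t) w
  linarith [(le_div_iff₀ ht).2 hmarkov]

theorem sq_sum_le_card_support_mul_sum_sq {μ : ι → ℝ} (hμ0 : ∀ i, 0 ≤ μ i) :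
    (∑ i, μ i) ^ 2 ≤ #(univ.filter (fun i => 0 < μ i)) * ∑ i, μ i ^ 2 := by
  have hsupp : ∑ i ∈ univ.filter (fun i => 0 < μ i), μ i = ∑ i, μ i :=
    sum_filter_of_ne fun i _ hi => (hμ0 i).lt_of_ne' hi
  calc (∑ i, μ i) ^ 2 = (∑ i ∈ univ.filter (fun i => 0 < μ i), μ i) ^ 2 := by rw [hsupp]
    _ ≤ #(univ.filter (fun i => 0 < μ i)) * ∑ i ∈ univ.filter (fun i => 0 < μ i), μ i ^ 2 :=
        sq_sum_le_card_mul_sum_sq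
    _ ≤ #(univ.filter (fun i => 0 < μ i)) * ∑ i, μ i ^ 2 :=
        mul_le_mul_of_nonneg_left
          (sum_le_sum_of_subset_of_nonneg (filter_subset _ _) fun i _ _ => sq_nonneg (μ i))
          (Nat.cast_nonneg _)

theorem card_support_mul_sup'_le [Nonempty ι] {μ ω : ι → ℝ} (hω1 : ∑ i, ω i = 1) {δ : ℝ}
    (hout : δ ≤ ∑ i ∈ univ.filter (fun i => ¬ 0 < μ i), ω i)
    (hmax : ∀ i, 0 < μ i → ω i = univ.sup' univ_nonempty ω) :
    #(univ.filter (fun i => 0 < μ i)) * univ.sup' univ_nonempty ω ≤ 1 - δ := by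
  have hconst : ∑ i ∈ univ.filter (fun i => 0 < μ i), ω i
      = #(univ.filter (fun i => 0 < μ i)) * univ.sup' univ_nonempty ω := by
    rw [sum_congr rfl fun i hi => hmax i (mem_filter.1 hi).2, sum_const, nsmul_eq_mul]
  have hsplit := sum_filter_add_sum_filter_not univ (fun i => 0 < μ i) ω
  linarith

theorem sup'_le_mul_sum_sq [Nonempty ι] {μ ω : ι → ℝ} (hμ0 : ∀ i, 0 ≤ μ i)
    (hμ1 : ∑ i, μ i = 1) (hω0 : ∀ i, 0 ≤ ω i) (hω1 : ∑ i, ω i = 1) {δ : ℝ}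
    (hout : δ ≤ ∑ i ∈ univ.filter (fun i => ¬ 0 < μ i), ω i)
    (hmax : ∀ i, 0 < μ i → ω i = univ.sup' univ_nonempty ω) :
    univ.sup' univ_nonempty ω ≤ (1 - δ) * ∑ i, μ i ^ 2 := by
  set M := univ.sup' univ_nonempty ω
  have hM0 : 0 ≤ M := (hω0 (Classical.arbitrary ι)).trans (le_sup' ω (mem_univ _))
  have hCS := sq_sum_le_card_support_mul_sum_sq hμ0
  rw [hμ1, one_pow] at hCS
  calc M = M * 1 := (mul_one M).symm
    _ ≤ M * (#(univ.filter (fun i => 0 < μ i)) * ∑ i, μ i ^ 2) := by gcongr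
    _ = (#(univ.filter (fun i => 0 < μ i)) * M) * ∑ i, μ i ^ 2 := by ring
    _ ≤ (1 - δ) * ∑ i, μ i ^ 2 := by
        gcongr
        exact card_support_mul_sup'_le hω1 hout hmax

end Weighted

section Autocorrelation

/-- `autocorr μ g = Pr(X'⁻¹ X = g)` for independent `X, X' ∼ μ`. -/
def autocorr (μ : G → ℝ) (g : G) : ℝ := ∑ h, μ h * μ (h * g⁻¹)

theorem autocorr_nonneg {μ : G → ℝ} (hμ0 : ∀ g, 0 ≤ μ g) (g : G) : 0 ≤ autocorr μ g :=
  sum_nonneg fun h _ => mul_nonneg (hμ0 h) (hμ0 _)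

theorem sum_autocorr (μ : G → ℝ) : ∑ g, autocorr μ g = (∑ g, μ g) ^ 2 := by
  have hshift : ∀ h : G, ∑ g, μ (h * g⁻¹) = ∑ g, μ g := fun h =>
    Fintype.sum_equiv ((Equiv.inv G).trans (Equiv.mulLeft h)) _ _ fun _ => rfl
  simp only [autocorr]
  rw [sum_comm]
  simp only [← mul_sum, hshift, ← sum_mul, sq]

theorem sum_sq_avg_mul_inv (μ : G → ℝ) (g : G) :
    ∑ h, ((μ h + μ (h * g⁻¹)) / 2) ^ 2 = (∑ h, μ h ^ 2 + autocorr μ g) / 2 := by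
  have hshift : ∑ h, μ (h * g⁻¹) ^ 2 = ∑ h, μ h ^ 2 :=
    Fintype.sum_equiv (Equiv.mulRight g⁻¹) _ _ fun _ => rfl
  calc ∑ h, ((μ h + μ (h * g⁻¹)) / 2) ^ 2
      = (∑ h, μ h ^ 2) / 4 + (∑ h, μ (h * g⁻¹) ^ 2) / 4 + autocorr μ g / 2 := by
        simp only [autocorr, sum_div, ← sum_add_distrib]
        exact sum_congr rfl fun h _ => by ring
    _ = (∑ h, μ h ^ 2 + autocorr μ g) / 2 := by rw [hshift]; ring

theorem sum_mul_autocorr_le [Nonempty G] {μ ω : G → ℝ} (hμ0 : ∀ g, 0 ≤ μ g) :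
    ∑ g, ω g * autocorr μ g ≤ univ.sup' univ_nonempty ω * (∑ g, μ g) ^ 2 :=
  calc ∑ g, ω g * autocorr μ g ≤ ∑ g, univ.sup' univ_nonempty ω * autocorr μ g :=
        sum_le_sum fun g _ =>
          mul_le_mul_of_nonneg_right (le_sup' ω (mem_univ g)) (autocorr_nonneg hμ0 g)
    _ = univ.sup' univ_nonempty ω * (∑ g, μ g) ^ 2 := by rw [← mul_sum, sum_autocorr]

theorem sum_mul_sum_sq_avg_le [Nonempty G] {μ ω : G → ℝ} (hμ : IsPMF μ) (hω : IsPMF ω)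
    {δ : ℝ} (hout : δ ≤ ∑ g ∈ univ.filter (fun g => ¬ 0 < μ g), ω g)
    (hmax : ∀ g, 0 < μ g → ω g = univ.sup' univ_nonempty ω) :
    ∑ g, ω g * ∑ h, ((μ h + μ (h * g⁻¹)) / 2) ^ 2 ≤ (1 - δ / 2) * ∑ h, μ h ^ 2 := by
  obtain ⟨hμ0, hμ1⟩ := hμ
  obtain ⟨hω0, hω1⟩ := hω
  have hM := sup'_le_mul_sum_sq hμ0 hμ1 hω0 hω1 hout hmax
  have hc := sum_mul_autocorr_le (ω := ω) hμ0
  rw [hμ1, one_pow, mul_one] at hc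
  calc ∑ g, ω g * ∑ h, ((μ h + μ (h * g⁻¹)) / 2) ^ 2
      = (∑ g, ω g) * (∑ h, μ h ^ 2) / 2 + (∑ g, ω g * autocorr μ g) / 2 := by
        simp only [sum_sq_avg_mul_inv, sum_mul, sum_div, ← sum_add_distrib]
        exact sum_congr rfl fun g _ => by ring
    _ ≤ (1 - δ / 2) * ∑ h, μ h ^ 2 := by rw [hω1]; linarith

end Autocorrelation

open Classical in
theorem stmt15_general [Nonempty G] (μ ω : G → ℝ) (hμ : IsPMF μ) (hω : IsPMF ω)
    (δ : ℝ) (hδ1 : δ ≤ 1)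
    (hout : δ ≤ ∑ g ∈ univ.filter (fun g => ¬ 0 < μ g), ω g)
    (hmax : ∀ g, 0 < μ g → ω g = univ.sup' univ_nonempty ω)
    (lam : ℝ) (hlam : 1 < lam) :
    1 - 1 / lam ≤ ∑ g ∈ univ.filter (fun g =>
      Real.sqrt (∑ h : G, ((μ h + μ (h * g⁻¹)) / 2) ^ 2) <
        Real.sqrt (lam * (1 - δ / 2)) * l2norm μ), ω g := by
  set f : G → ℝ := fun g => ∑ h, ((μ h + μ (h * g⁻¹)) / 2) ^ 2
  set S := ∑ h, μ h ^ 2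
  have hS : 0 < S := by
    have hCS := sq_sum_le_card_support_mul_sum_sq hμ.1
    rw [hμ.2, one_pow] at hCS
    exact pos_of_mul_pos_right (one_pos.trans_le hCS) (Nat.cast_nonneg _)
  have hδ2 : 0 < 1 - δ / 2 := by linarith
  have hlamδ : 0 < lam * (1 - δ / 2) := mul_pos (by linarith) hδ2
  have ht : 0 < lam * (1 - δ / 2) * S := mul_pos hlamδ hS
  have hf0 : ∀ g, 0 ≤ f g := fun g => sum_nonneg fun h _ => sq_nonneg _
  have hpred : ∀ g, Real.sqrt (f g) < Real.sqrt (lam * (1 - δ / 2)) * l2norm μ ↔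
      f g < lam * (1 - δ / 2) * S := fun g => by
    rw [l2norm, ← Real.sqrt_mul hlamδ.le, Real.sqrt_lt_sqrt_iff (hf0 g)]
  rw [filter_congr fun g _ => hpred g]
  refine le_trans ?_ (one_sub_div_le_sum_filter_lt hω.1 hω.2 hf0 ht)
  have hE := sum_mul_sum_sq_avg_le hμ hω hout hmax
  have hX : (1 - δ / 2) * S ≠ 0 := (mul_pos hδ2 hS).ne'
  rw [mul_assoc, one_div, ← div_mul_cancel_right₀ hX lam]
  gcongr

open Classical in
/-- If Pr(W ∉ supp(X)) ≥ δ and W has its maximal value on supp(X), then with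
    probability ≥ 1 − 1/λ over g ∼ W, ‖Xg^E‖ < √(λ(1−δ/2))·‖X‖, where for fixed g,
    Xg^E has distribution h ↦ (μ h + μ (h g⁻¹))/2. -/
theorem stmt15 [Nonempty G] (μ ω : G → ℝ) (hμ : IsPMF μ) (hω : IsPMF ω)
    (δ : ℝ) (hδ0 : 0 ≤ δ) (hδ1 : δ ≤ 1)
    (hout : δ ≤ ∑ g ∈ univ.filter (fun g => ¬ 0 < μ g), ω g)
    (hmax : ∀ g, 0 < μ g → ω g = univ.sup' univ_nonempty ω)
    (lam : ℝ) (hlam : 1 < lam) :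
    1 - 1 / lam ≤ ∑ g ∈ univ.filter (fun g =>
      Real.sqrt (∑ h : G, ((μ h + μ (h * g⁻¹)) / 2) ^ 2) <
        Real.sqrt (lam * (1 - δ / 2)) * l2norm μ), ω g :=
  stmt15_general μ ω hμ hω δ hδ1 hout hmax lam hlam
end

section
/- Let A be a finite subset of a group G with A = A⁻¹ and A nonempty, and let δ < 1/4. Assume that for every g ∈ A, |Ag ∖ A| ≤ δ|A|. Then |AA ∖ A| ≤ (δ/(1−2δ))·|A|, and moreover AA is a subgroup of G. -/
/-!
Write `f g = |Ag \ A|`. The inclusion `A(ab) \ A ⊆ (Aa \ A)b ∪ (Ab \ A)` makes `f` subadditive,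
so `f x ≤ 2δ|A| < |A|/2` for `x ∈ AA`. Hence for `x, y ∈ AA` the sets `Ax ∩ A` and `Ay ∩ A` meet,
which gives `xy⁻¹ ∈ A⁻¹A = AA`, so `AA` is a subgroup. For the size bound, double count the pairs
`(g, x) ∈ A × (AA \ A)` with `x ∈ Ag`: each `g` lies in at most `f g ≤ δ|A|` of them, each `x` in
at least `|A⁻¹x ∩ A| = |Ax ∩ A| ≥ (1 - 2δ)|A|`.
-/

open Finset Pointwise

namespace Finset

lemma sum_card_inter_eq_sum_card_filter_mem {ι α : Type*} [DecidableEq α] (s : Finset α)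
    (t : Finset ι) (B : ι → Finset α) :
    ∑ i ∈ t, #(s ∩ B i) = ∑ a ∈ s, #{i ∈ t | a ∈ B i} := by
  simp_rw [← filter_mem_eq_inter, card_eq_sum_ones, sum_filter]
  exact sum_comm

variable {G : Type*} [Group G] [DecidableEq G] (A : Finset G)

lemma card_image_mul_right_inter_add_card_sdiff (g : G) :
    #(A.image (· * g) ∩ A) + #(A.image (· * g) \ A) = #A := by
  rw [card_inter_add_card_sdiff, card_image_of_injective _ (mul_left_injective g)]

lemma card_image_mul_right_sdiff_mul_le (a b : G) :
    #(A.image (· * (a * b)) \ A) ≤ #(A.image (· * a) \ A) + #(A.image (· * b) \ A) := by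
  have hsub : A.image (· * (a * b)) \ A ⊆
      (A.image (· * a) \ A).image (· * b) ∪ (A.image (· * b) \ A) := by
    intro x hx
    simp only [mem_sdiff, mem_image, mem_union] at hx ⊢
    obtain ⟨⟨c, hc, rfl⟩, hcab⟩ := hx
    by_cases hca : c * a ∈ A
    · exact .inr ⟨⟨c * a, hca, mul_assoc c a b⟩, hcab⟩
    · exact .inl ⟨c * a, ⟨⟨c, hc, rfl⟩, hca⟩, mul_assoc c a b⟩
  calc _ ≤ _ := card_le_card hsub
    _ ≤ _ := card_union_le _ _
    _ = _ := by rw [card_image_of_injective _ (mul_left_injective b)]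

lemma filter_mem_image_mul_right (x : G) :
    {g ∈ A | x ∈ A.image (· * g)} = A⁻¹.image (· * x) ∩ A := by
  ext g
  simp only [mem_filter, mem_image, mem_inter, mem_inv']
  constructor
  · rintro ⟨hg, a, ha, rfl⟩
    exact ⟨⟨a⁻¹, by simpa using ha, by group⟩, hg⟩
  · rintro ⟨⟨a, ha, rfl⟩, hg⟩
    exact ⟨hg, a⁻¹, ha, by group⟩

lemma mul_inv_mem_inv_mul_of_card_sdiff_add_lt {x y : G}
    (h : #(A.image (· * x) \ A) + #(A.image (· * y) \ A) < #A) : x * y⁻¹ ∈ A⁻¹ * A := by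
  have hx := card_image_mul_right_inter_add_card_sdiff A x
  have hy := card_image_mul_right_inter_add_card_sdiff A y
  have hcard : #A < #(A.image (· * x) ∩ A) + #(A.image (· * y) ∩ A) := by omega
  obtain ⟨c, hc⟩ := inter_nonempty_of_card_lt_card_add_card inter_subset_right inter_subset_right hcard
  simp only [mem_inter, mem_image] at hc
  obtain ⟨⟨⟨a, ha, rfl⟩, -⟩, ⟨b, hb, hab⟩, -⟩ := hc
  have hxy : x * y⁻¹ = a⁻¹ * b := by
    rw [eq_inv_mul_iff_mul_eq, ← mul_assoc, ← hab, mul_inv_cancel_right]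
  exact hxy ▸ mul_mem_mul (inv_mem_inv ha) hb

variable {A} {δ : ℝ}
  (hsmall : ∀ g ∈ A, (#(A.image (· * g) \ A) : ℝ) ≤ δ * #A)
include hsmall

lemma card_image_mul_right_sdiff_le_of_mem_mul {x : G} (hx : x ∈ A * A) :
    (#(A.image (· * x) \ A) : ℝ) ≤ 2 * δ * #A := by
  obtain ⟨a, ha, b, hb, rfl⟩ := mem_mul.1 hx
  have hab : (#(A.image (· * (a * b)) \ A) : ℝ) ≤
      #(A.image (· * a) \ A) + #(A.image (· * b) \ A) := by
    exact_mod_cast card_image_mul_right_sdiff_mul_le A a b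
  linarith [hsmall a ha, hsmall b hb]

lemma card_mul_self_sdiff_le (hsymm : A⁻¹ = A) :
    (1 - 2 * δ) * #A * #((A * A) \ A) ≤ δ * #A * #A := by
  set T := (A * A) \ A
  have hlower : ∀ x ∈ T, (1 - 2 * δ) * #A ≤ (#{g ∈ A | x ∈ A.image (· * g)} : ℝ) := by
    intro x hx
    have hsplit : (#(A.image (· * x) ∩ A) : ℝ) + #(A.image (· * x) \ A) = #A := by
      exact_mod_cast card_image_mul_right_inter_add_card_sdiff A x
    rw [filter_mem_image_mul_right, hsymm]
    linarith [card_image_mul_right_sdiff_le_of_mem_mul hsmall (mem_sdiff.1 hx).1]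
  have hupper : ∀ g ∈ A, (#(T ∩ A.image (· * g)) : ℝ) ≤ δ * #A := by
    refine fun g hg ↦ le_trans ?_ (hsmall g hg)
    exact_mod_cast card_le_card fun z hz ↦
      mem_sdiff.2 ⟨(mem_inter.1 hz).2, (mem_sdiff.1 (mem_inter.1 hz).1).2⟩
  calc (1 - 2 * δ) * #A * #T = ∑ _x ∈ T, (1 - 2 * δ) * (#A : ℝ) := by
        rw [sum_const, nsmul_eq_mul]; ring
    _ ≤ ∑ x ∈ T, (#{g ∈ A | x ∈ A.image (· * g)} : ℝ) := sum_le_sum hlower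
    _ = ∑ g ∈ A, (#(T ∩ A.image (· * g)) : ℝ) := by
        exact_mod_cast (sum_card_inter_eq_sum_card_filter_mem T A _).symm
    _ ≤ ∑ _g ∈ A, δ * (#A : ℝ) := sum_le_sum hupper
    _ = δ * #A * #A := by rw [sum_const, nsmul_eq_mul]; ring

lemma exists_subgroup_coe_eq_mul_self (hA : A.Nonempty) (hsymm : A⁻¹ = A) (hδ : δ < 1 / 4) :
    ∃ H : Subgroup G, ((A * A : Finset G) : Set G) = H := by
  have hApos : (0 : ℝ) < #A := by exact_mod_cast hA.card_pos
  have hdiv : ∀ x ∈ A * A, ∀ y ∈ A * A, x * y⁻¹ ∈ A * A := by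
    intro x hx y hy
    have hxy : (#(A.image (· * x) \ A) : ℝ) + #(A.image (· * y) \ A) < #A := by
      nlinarith [card_image_mul_right_sdiff_le_of_mem_mul hsmall hx,
        card_image_mul_right_sdiff_le_of_mem_mul hsmall hy]
    simpa only [hsymm] using mul_inv_mem_inv_mul_of_card_sdiff_add_lt A (by exact_mod_cast hxy)
  exact ⟨Subgroup.ofDiv _ (by simpa using hA.mul hA) hdiv, rfl⟩

end Finset

/-- Fuzzy subgroup lemma: if A = A⁻¹, δ < 1/4, and |Ag \ A| ≤ δ|A| for all g ∈ A,
    then |AA \ A| ≤ (δ/(1−2δ))|A| and AA is a subgroup of G. -/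
theorem stmt16 {G : Type*} [Group G] [DecidableEq G] (A : Finset G) (hA : A.Nonempty)
    (hsymm : A⁻¹ = A) (δ : ℝ) (hδ : δ < 1 / 4)
    (h : ∀ g ∈ A, ((A.image (· * g) \ A).card : ℝ) ≤ δ * (A.card : ℝ)) :
    (((A * A) \ A).card : ℝ) ≤ δ / (1 - 2 * δ) * (A.card : ℝ) ∧
      ∃ H : Subgroup G, ((A * A : Finset G) : Set G) = (H : Set G) := by
  refine ⟨?_, exists_subgroup_coe_eq_mul_self h hA hsymm hδ⟩
  have hApos : (0 : ℝ) < #A := by exact_mod_cast hA.card_pos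
  rw [div_mul_eq_mul_div, le_div_iff₀ (by linarith)]
  nlinarith [card_mul_self_sdiff_le h hsymm]
end
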